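/- arXiv:2002.04506 — 2 statements merged into one kernel-verified Lean document; each statement's English description precedes it below -/
import Mathlib

section
/- If β = π(q₁,q₂,m) J π(q₁',q₂',m')* J⁻¹ commutes with the representation of the unreduced Pati-Salam algebra ℍ_R ⊕ ℍ_L ⊕ M_4(ℂ), commutes with J, and satisfies β² = 1 and β* = β, then β = π(η₁1₂, η₂1₂, η₃1₄) J π(η₁1₂, η₂1₂, η₃1₄) J⁻¹ for some signs η₁, η₂, η₃ ∈ {±1}. -/
noncomputable section
open Matrix
open scoped ComplexConjugate

abbrev M2 : Type := Matrix (Fin 2) (Fin 2) ℂ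
abbrev M3 : Type := Matrix (Fin 3) (Fin 3) ℂ
abbrev M4 : Type := Matrix (Fin 4) (Fin 4) ℂ
abbrev Idx : Type := Fin 4 × Fin 2 × Fin 4
abbrev M32 : Type := Matrix Idx Idx ℂ

/-- matrix unit `e_{ij}` -/
def eu {n : ℕ} (i j : Fin n) : Matrix (Fin n) (Fin n) ℂ := Matrix.single i j 1

/-- the element `A ⊗ E ⊗ B` of `M₄(ℂ) ⊗ M₂(ℂ) ⊗ M₄(ℂ)` realized as a matrix on `ℂ⁴ ⊗ ℂ² ⊗ ℂ⁴` -/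
def tp (A : M4) (E : M2) (B : M4) : M32 :=
  Matrix.of fun p q => A p.1 q.1 * E p.2.1 q.2.1 * B p.2.2 q.2.2

/-- a 4×4 matrix assembled from four 2×2 blocks -/
def bm (a b c d : M2) : M4 :=
  Matrix.reindex finSumFinEquiv finSumFinEquiv (Matrix.fromBlocks a b c d)

/-- block-diagonal `diag(a, b)` with 2×2 blocks -/
def diag22 (a b : M2) : M4 := bm a 0 0 b

/-- block-diagonal `diag(l, n)` with a scalar and a 3×3 block -/
def diag13 (l : ℂ) (n : M3) : M4 :=
  Matrix.reindex finSumFinEquiv finSumFinEquiv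
    (Matrix.fromBlocks (Matrix.diagonal fun _ : Fin 1 => l) 0 0 n)

/-- the standard embedding of the quaternions into `M₂(ℂ)` -/
def IsQuat (q : M2) : Prop := ∃ x y : ℂ, q = !![x, y; -(conj y), conj x]

/-- the Hilbert space `ℂ⁴ ⊗ ℂ² ⊗ ℂ⁴ ≅ M₄(ℂ) ⊕ M₄(ℂ)` -/
abbrev HSp : Type := Idx → ℂ

/-- index swap underlying the real structure `J` -/
def sw (p : Idx) : Idx := (p.2.2, if p.2.1 = 0 then 1 else 0, p.1)

/-- the antilinear real structure `J[v;w] = [w*;v*]` -/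
noncomputable def Jr (ψ : HSp) : HSp := fun p => conj (ψ (sw p))

/-- action of an operator on the Hilbert space -/
def act (X : M32) (ψ : HSp) : HSp := X.mulVec ψ

/-- conjugation `X ↦ J X J⁻¹` by the real structure, at the matrix level -/
noncomputable def Jconj (X : M32) : M32 := Matrix.of fun p q => conj (X (sw p) (sw q))

/-- the opposite-algebra element `J X* J⁻¹` -/
noncomputable def opp (X : M32) : M32 := Jconj Xᴴ

/-- representation of the (unreduced) Pati–Salam algebra `ℍ_R ⊕ ℍ_L ⊕ M₄(ℂ)` -/
def piPS (q₁ q₂ : M2) (m : M4) : M32 :=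
  tp (diag22 q₁ q₂) (eu 0 0) 1 + tp m (eu 1 1) 1

/-- representation of the reduced Pati–Salam algebra `ℍ_R ⊕ ℍ_L ⊕ ℂ ⊕ M₃(ℂ)` -/
def piRed (q₁ q₂ : M2) (l : ℂ) (n : M3) : M32 := piPS q₁ q₂ (diag13 l n)

/-- the grading γ -/
def gam : M32 := tp (diag22 1 (-1)) (eu 0 0) 1 + tp 1 (eu 1 1) (diag22 (-1) 1)

/-- the grading γ⋆ -/
def gamStar : M32 :=
  tp (diag22 1 (-1)) (eu 0 0) (diag13 1 (-1)) + tp (diag13 (-1) 1) (eu 1 1) (diag22 1 (-1))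

/-- the nontrivial β for the unreduced model -/
def betaPS : M32 := tp (diag22 1 (-1)) (eu 0 0) 1 + tp 1 (eu 1 1) (diag22 1 (-1))



/-!
On `H = (ℂ⁴ ⊗ ℂ⁴) ⊕ (ℂ⁴ ⊗ ℂ⁴)` (the two values of the middle `ℂ²` index) every operator
in sight, the represented algebra, its opposite and `β`, has the form
`sectorOp A B C E = (A ⊗ B) ⊕ (C ⊗ E)`; for `β` the factors are `A = diag(q₁, q₂)`,
`B = m'ᵗ`, `C = m`, `E = diag(q₁', q₂')ᵗ`. Conjugation by `J` sends this to
`(Ē ⊗ C̄) ⊕ (B̄ ⊗ Ā)`, so `J β J⁻¹ = β` lets us write `β = (A ⊗ B) ⊕ (B̄ ⊗ Ā)`.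
Since `β² = 1` no tensor factor vanishes, so commutation with `π(p₁, p₂, n)` cancels to `A`
commuting with every `diag(p₁, p₂)` and `B̄` with every `n ∈ M₄(ℂ)`: `B` is a scalar `ν` and
each `qᵢ` lies in the centre `ℝ` of `ℍ`. Then `β² = 1` makes `ηᵢ = ν qᵢ` square to one;
being signs they are real, and `β = π(η₁, η₂, 1) J π(η₁, η₂, 1)* J⁻¹`.
-/

open scoped Kronecker

namespace Matrix

variable {R l m n p : Type*}

theorem kronecker_right_cancel₀ [MulZeroClass R] [IsRightCancelMulZero R] {A B : Matrix l m R}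
    {C : Matrix n p R} (hC : C ≠ 0) (h : A ⊗ₖ C = B ⊗ₖ C) : A = B := by
  obtain ⟨k, k', hk⟩ : ∃ k k', C k k' ≠ 0 := by
    by_contra! h0
    exact hC (Matrix.ext h0)
  ext i j
  exact mul_right_cancel₀ hk (by simpa using congr($h (i, k) (j, k')))

theorem ne_zero_of_kronecker_eq_one [MulZeroOneClass R] [Nontrivial R] [DecidableEq m]
    [DecidableEq n] [Nonempty m] [Nonempty n] {A : Matrix m m R} {B : Matrix n n R}
    (h : A ⊗ₖ B = 1) : A ≠ 0 ∧ B ≠ 0 := by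
  obtain ⟨i⟩ := ‹Nonempty m›
  obtain ⟨k⟩ := ‹Nonempty n›
  constructor <;> rintro rfl <;> simpa using congr($h (i, k) (i, k))

theorem eq_smul_one_of_forall_commute [Fintype n] [DecidableEq n] [CommSemiring R]
    {M : Matrix n n R} (h : ∀ N, Commute M N) : ∃ c : R, M = c • 1 := by
  obtain ⟨c, hc⟩ := mem_range_scalar_iff_commute_single'.mpr fun i j => (h _).symm
  exact ⟨c, by rw [← hc, smul_one_eq_diagonal]; rfl⟩

end Matrix

theorem Complex.eq_one_or_neg_one_and_conj_eq_of_mul_self_eq_one {η : ℂ} (h : η * η = 1) :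
    (η = 1 ∨ η = -1) ∧ conj η = η := by
  rcases mul_self_eq_one_iff.mp h with rfl | rfl <;> simp

theorem isQuat_one : IsQuat 1 :=
  ⟨1, 0, by ext i j; fin_cases i <;> fin_cases j <;> simp⟩

theorem IsQuat.exists_real_smul_one_of_commute {q : M2} (hq : IsQuat q)
    (h : ∀ p, IsQuat p → Commute q p) : ∃ x : ℝ, q = (x : ℂ) • 1 := by
  obtain ⟨x, y, rfl⟩ := hq
  -- commuting with the unit quaternion `j` forces `x` real, with `k` forces `y = 0`
  have hj := (h !![0, 1; -1, 0] ⟨0, 1, by ext i j; fin_cases i <;> fin_cases j <;> simp⟩).eq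
  have hk := (h !![Complex.I, 0; 0, -Complex.I]
    ⟨Complex.I, 0, by ext i j; fin_cases i <;> fin_cases j <;> simp⟩).eq
  obtain ⟨x, rfl⟩ : ∃ r : ℝ, (r : ℂ) = x :=
    ⟨x.re, Complex.conj_eq_iff_re.mp (by simpa using congr($hj 0 1).symm)⟩
  obtain rfl : y = 0 := by
    have h01 : -(y * Complex.I) = Complex.I * y := by simpa using congr($hk 0 1)
    simpa [Complex.I_ne_zero] using (by linear_combination -h01 : y * (2 * Complex.I) = 0)
  exact ⟨x, by ext i j; fin_cases i <;> fin_cases j <;> simp⟩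

theorem diag22_mul (a b c d : M2) : diag22 a b * diag22 c d = diag22 (a * c) (b * d) := by
  simp [diag22, bm, fromBlocks_multiply]

theorem diag22_inj {a b c d : M2} : diag22 a b = diag22 c d ↔ a = c ∧ b = d := by
  rw [diag22, diag22, bm, bm, (reindex _ _).injective.eq_iff, fromBlocks_inj]
  simp

theorem diag22_commute_diag22_iff {a b c d : M2} :
    Commute (diag22 a b) (diag22 c d) ↔ Commute a c ∧ Commute b d := by
  simp only [Commute, SemiconjBy, diag22_mul, diag22_inj]

theorem diag22_smul_one (a b : ℂ) : diag22 (a • 1) (b • 1) = diagonal ![a, a, b, b] := by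
  rw [diag22, bm, smul_one_eq_diagonal, smul_one_eq_diagonal, fromBlocks_diagonal, reindex_apply,
    submatrix_diagonal_equiv]
  congr 1
  ext i
  fin_cases i <;> rfl

def sectorOp (A B C D : M4) : M32 := tp A (eu 0 0) B + tp C (eu 1 1) D

theorem piPS_eq_sectorOp (q₁ q₂ : M2) (m : M4) :
    piPS q₁ q₂ m = sectorOp (diag22 q₁ q₂) 1 m 1 := rfl

theorem sectorOp_eq_sectorOp_iff {A B C D A' B' C' D' : M4} :
    sectorOp A B C D = sectorOp A' B' C' D' ↔ A ⊗ₖ B = A' ⊗ₖ B' ∧ C ⊗ₖ D = C' ⊗ₖ D' := by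
  constructor
  · intro h
    constructor <;> ext ⟨i, k⟩ ⟨j, l⟩
    · simpa [sectorOp, tp, eu] using congr($h (i, 0, k) (j, 0, l))
    · simpa [sectorOp, tp, eu] using congr($h (i, 1, k) (j, 1, l))
  · rintro ⟨h₀, h₁⟩
    ext ⟨i, s, k⟩ ⟨j, t, l⟩
    fin_cases s <;> fin_cases t
    · simpa [sectorOp, tp, eu] using congr($h₀ (i, k) (j, l))
    · simp [sectorOp, tp, eu]
    · simp [sectorOp, tp, eu]
    · simpa [sectorOp, tp, eu] using congr($h₁ (i, k) (j, l))

theorem sectorOp_one : sectorOp 1 1 1 1 = 1 := by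
  ext ⟨i, s, k⟩ ⟨j, t, l⟩
  fin_cases s <;> fin_cases t <;> simp [sectorOp, tp, eu, one_apply, Prod.ext_iff] <;>
    split_ifs <;> tauto

theorem opp_sectorOp (A B C D : M4) : opp (sectorOp A B C D) = sectorOp Dᵀ Cᵀ Bᵀ Aᵀ := by
  ext ⟨i, s, k⟩ ⟨j, t, l⟩
  fin_cases s <;> fin_cases t <;> simp [opp, Jconj, sectorOp, tp, eu, sw] <;> ring

theorem Jconj_sectorOp (A B C D : M4) :
    Jconj (sectorOp A B C D) = sectorOp (D.map conj) (C.map conj) (B.map conj) (A.map conj) := by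
  ext ⟨i, s, k⟩ ⟨j, t, l⟩
  fin_cases s <;> fin_cases t <;> simp [Jconj, sectorOp, tp, eu, sw] <;> ring

theorem sectorOp_mul_sectorOp (A B C D A' B' C' D' : M4) :
    sectorOp A B C D * sectorOp A' B' C' D' = sectorOp (A * A') (B * B') (C * C') (D * D') := by
  ext ⟨i, s, k⟩ ⟨j, t, l⟩
  fin_cases s <;> fin_cases t <;>
    simp [sectorOp, tp, eu, mul_apply, Fintype.sum_prod_type, Finset.sum_mul_sum] <;>
    exact Finset.sum_congr rfl fun _ _ => Finset.sum_congr rfl fun _ _ => by ring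

theorem piPS_mul_opp_piPS (q₁ q₂ q₁' q₂' : M2) (m m' : M4) :
    piPS q₁ q₂ m * opp (piPS q₁' q₂' m') = sectorOp (diag22 q₁ q₂) m'ᵀ m (diag22 q₁' q₂')ᵀ := by
  simp [piPS_eq_sectorOp, opp_sectorOp, sectorOp_mul_sectorOp]

theorem sectorOp_eq_of_Jconj_eq {A B C D : M4} (h : Jconj (sectorOp A B C D) = sectorOp A B C D) :
    sectorOp A B C D = sectorOp A B (B.map conj) (A.map conj) := by
  rw [Jconj_sectorOp, sectorOp_eq_sectorOp_iff] at h
  exact sectorOp_eq_sectorOp_iff.mpr ⟨rfl, h.2.symm⟩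

theorem commute_of_commute_sectorOp {A B C D A' C' : M4}
    (hsq : sectorOp A B C D * sectorOp A B C D = 1)
    (h : Commute (sectorOp A B C D) (sectorOp A' 1 C' 1)) : Commute A A' ∧ Commute C C' := by
  rw [← sectorOp_one, sectorOp_mul_sectorOp, sectorOp_eq_sectorOp_iff, one_kronecker_one] at hsq
  have h := h.eq
  simp only [sectorOp_mul_sectorOp, mul_one, one_mul, sectorOp_eq_sectorOp_iff] at h
  have hB : B ≠ 0 := right_ne_zero_of_mul (ne_zero_of_kronecker_eq_one hsq.1).2
  have hD : D ≠ 0 := right_ne_zero_of_mul (ne_zero_of_kronecker_eq_one hsq.2).2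
  exact ⟨kronecker_right_cancel₀ hB h.1, kronecker_right_cancel₀ hD h.2⟩

theorem exists_signs_of_mul_self_eq_one {x₁ x₂ : ℝ} {c : ℂ} {S : M32}
    (hS : S = sectorOp (diagonal ![(x₁ : ℂ), x₁, x₂, x₂]) (conj c • 1) (c • 1)
      (diagonal ![(x₁ : ℂ), x₁, x₂, x₂]))
    (hsq : S * S = 1) :
    ∃ η₁ η₂ : ℂ, (η₁ = 1 ∨ η₁ = -1) ∧ (η₂ = 1 ∨ η₂ = -1) ∧
      S = sectorOp (diagonal ![η₁, η₁, η₂, η₂]) 1 1 (diagonal ![η₁, η₁, η₂, η₂]) := by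
  subst hS
  rw [sectorOp_mul_sectorOp, ← sectorOp_one, sectorOp_eq_sectorOp_iff] at hsq
  have h₁ : (x₁ : ℂ) * x₁ * (conj c * conj c) = 1 := by
    simpa [diagonal_mul_diagonal] using congr($(hsq.1) (0, 0) (0, 0))
  have h₂ : (x₂ : ℂ) * x₂ * (conj c * conj c) = 1 := by
    simpa [diagonal_mul_diagonal] using congr($(hsq.1) (2, 0) (2, 0))
  obtain ⟨hη₁, hr₁⟩ := Complex.eq_one_or_neg_one_and_conj_eq_of_mul_self_eq_one
    (η := conj c * x₁) (by linear_combination h₁)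
  obtain ⟨hη₂, hr₂⟩ := Complex.eq_one_or_neg_one_and_conj_eq_of_mul_self_eq_one
    (η := conj c * x₂) (by linear_combination h₂)
  simp only [map_mul, Complex.conj_conj, Complex.conj_ofReal] at hr₁ hr₂
  refine ⟨_, _, hη₁, hη₂, sectorOp_eq_sectorOp_iff.mpr ⟨?_, ?_⟩⟩
  · rw [kronecker_smul, ← smul_kronecker, ← diagonal_smul]
    congr
    ext i; fin_cases i <;> simp
  · rw [smul_kronecker, ← kronecker_smul, ← diagonal_smul]
    congr
    ext i; fin_cases i <;> simp [hr₁, hr₂]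

theorem beta_unreduced_form_general (q₁ q₂ q₁' q₂' : M2) (m m' : M4)
    (h₁ : IsQuat q₁) (h₂ : IsQuat q₂)
    (β : M32) (hβ : β = piPS q₁ q₂ m * opp (piPS q₁' q₂' m'))
    (hcomm : ∀ (p₁ p₂ : M2) (n : M4), IsQuat p₁ → IsQuat p₂ →
      β * piPS p₁ p₂ n = piPS p₁ p₂ n * β)
    (hJ : Jconj β = β) (hsq : β * β = 1) :
    ∃ η₁ η₂ η₃ : ℂ, (η₁ = 1 ∨ η₁ = -1) ∧ (η₂ = 1 ∨ η₂ = -1) ∧ (η₃ = 1 ∨ η₃ = -1) ∧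
      β = piPS (η₁ • 1) (η₂ • 1) (η₃ • 1) * opp (piPS (η₁ • 1) (η₂ • 1) (η₃ • 1)) := by
  rw [piPS_mul_opp_piPS] at hβ
  rw [hβ] at hJ
  obtain rfl := hβ.trans (sectorOp_eq_of_Jconj_eq hJ)
  have hcomm' (p₁ p₂ : M2) (n : M4) (hp₁ : IsQuat p₁) (hp₂ : IsQuat p₂) :=
    commute_of_commute_sectorOp hsq (hcomm p₁ p₂ n hp₁ hp₂)
  obtain ⟨c, hc⟩ := eq_smul_one_of_forall_commute fun n => (hcomm' 1 1 n isQuat_one isQuat_one).2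
  have hq (p₁ p₂ : M2) (hp₁ : IsQuat p₁) (hp₂ : IsQuat p₂) : Commute q₁ p₁ ∧ Commute q₂ p₂ :=
    diag22_commute_diag22_iff.mp (hcomm' p₁ p₂ 0 hp₁ hp₂).1
  obtain ⟨x₁, rfl⟩ := h₁.exists_real_smul_one_of_commute fun p hp => (hq p 1 hp isQuat_one).1
  obtain ⟨x₂, rfl⟩ := h₂.exists_real_smul_one_of_commute fun p hp => (hq 1 p isQuat_one hp).2
  have hm' : m'ᵀ = conj c • 1 := by
    ext i j
    simpa [one_apply, apply_ite] using congr(conj ($hc i j))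
  have hD : (diagonal ![(x₁ : ℂ), x₁, x₂, x₂]).map conj = diagonal ![(x₁ : ℂ), x₁, x₂, x₂] := by
    rw [diagonal_map (map_zero _)]
    congr; ext i; fin_cases i <;> simp
  rw [hc, hm', diag22_smul_one, hD] at hsq ⊢
  obtain ⟨η₁, η₂, hη₁, hη₂, hβ⟩ := exists_signs_of_mul_self_eq_one rfl hsq
  refine ⟨η₁, η₂, 1, hη₁, hη₂, Or.inl rfl, ?_⟩
  simp [hβ, piPS_mul_opp_piPS, diag22_smul_one]

/-- Any `β = π(q₁,q₂,m) J π(q₁',q₂',m')* J⁻¹` commuting with the represented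
unreduced Pati–Salam algebra and with `J`, with `β² = 1` and `β* = β`, equals
`π(η₁1₂, η₂1₂, η₃1₄) J π(η₁1₂, η₂1₂, η₃1₄)* J⁻¹` for some signs `η₁, η₂, η₃`. -/
theorem beta_unreduced_form (q₁ q₂ q₁' q₂' : M2) (m m' : M4)
    (h₁ : IsQuat q₁) (h₂ : IsQuat q₂) (h₁' : IsQuat q₁') (h₂' : IsQuat q₂')
    (β : M32) (hβ : β = piPS q₁ q₂ m * opp (piPS q₁' q₂' m'))
    (hcomm : ∀ (p₁ p₂ : M2) (n : M4), IsQuat p₁ → IsQuat p₂ →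
      β * piPS p₁ p₂ n = piPS p₁ p₂ n * β)
    (hJ : Jconj β = β) (hsq : β * β = 1) (hsa : βᴴ = β) :
    ∃ η₁ η₂ η₃ : ℂ, (η₁ = 1 ∨ η₁ = -1) ∧ (η₂ = 1 ∨ η₂ = -1) ∧ (η₃ = 1 ∨ η₃ = -1) ∧
      β = piPS (η₁ • 1) (η₂ • 1) (η₃ • 1) * opp (piPS (η₁ • 1) (η₂ • 1) (η₃ • 1)) :=
  beta_unreduced_form_general q₁ q₂ q₁' q₂' m m' h₁ h₂ β hβ hcomm hJ hsq
end
end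

section
/- A Dirac operator D = D₀ + J D₀ J⁻¹ commutes with β = diag(1₂,-1₂) ⊗ e₁₁ ⊗ 1₄ + 1₄ ⊗ e₂₂ ⊗ diag(1₂,-1₂) if and only if D₀ = Σ_k { diag(X̃_k, Ỹ_k) ⊗ e₁₁ ⊗ Ã_k + [[P̃_k, Q̃_k],[0,0]] ⊗ e₁₂ ⊗ [[Z̃_k, 0],[T̃_k, 0]] + [[0,0],[Ũ_k, Ṽ_k]] ⊗ e₁₂ ⊗ [[0, W̃_k],[0, S̃_k]] }, with all blocks in M_2(ℂ) and Ã_k ∈ M_4(ℂ). -/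
noncomputable section
open Matrix
open scoped ComplexConjugate

/-!
In the standard basis of `ℂ⁴ ⊗ ℂ² ⊗ ℂ⁴` the operator `β` is diagonal with entries `±1`: the sign
is read off the first factor on the `e₁₁` half and off the last factor on the `e₂₂` half
(`betaPos`). A matrix commutes with a diagonal matrix iff it has no entries between different
eigenvalues. `J` exchanges the two halves and preserves the sign; since `D₀` only has rows in the
`e₁₁` half, `J D₀ J⁻¹` only has rows in the `e₂₂` half, so `D` commutes with `β` iff `D₀` does.
Expanding `D₀` in matrix units, every unit that respects the sign is of one of the three block
shapes of the statement (according to the middle factor and to the sign of the row), and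
conversely every such shape respects the sign.
-/

theorem Matrix.mul_diagonal_eq_diagonal_mul_iff {ι R : Type*} [Fintype ι] [DecidableEq ι]
    [CommRing R] [NoZeroDivisors R] (M : Matrix ι ι R) (d : ι → R) :
    M * diagonal d = diagonal d * M ↔ ∀ i j, d i ≠ d j → M i j = 0 := by
  simp only [← Matrix.ext_iff, mul_diagonal, diagonal_mul]
  refine forall₂_congr fun i j => ?_
  rw [mul_comm (d i), ← sub_eq_zero, ← mul_sub, mul_eq_zero, sub_eq_zero, or_iff_not_imp_right,
    eq_comm]

lemma fin4_cases (i : Fin 4) :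
    (∃ k : Fin 2, i = Fin.castAdd 2 k) ∨ ∃ k : Fin 2, i = k.addNat 2 := by
  revert i; decide

def upper (i : Fin 4) : Bool := decide ((i : ℕ) < 2)

@[simp] lemma upper_castAdd (i : Fin 2) : upper (Fin.castAdd 2 i) = true := by
  revert i; decide

@[simp] lemma upper_addNat (i : Fin 2) : upper (i.addNat 2) = false := by
  revert i; decide

@[simp] lemma bm_castAdd_castAdd (a b c d : M2) (i j : Fin 2) :
    bm a b c d (Fin.castAdd 2 i) (Fin.castAdd 2 j) = a i j := by
  simp only [bm, reindex_apply, submatrix_apply, finSumFinEquiv_symm_apply_castAdd,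
    fromBlocks_apply₁₁]

@[simp] lemma bm_castAdd_addNat (a b c d : M2) (i j : Fin 2) :
    bm a b c d (Fin.castAdd 2 i) (j.addNat 2) = b i j := by
  simp only [bm, reindex_apply, submatrix_apply, finSumFinEquiv_symm_apply_castAdd,
    ← Fin.natAdd_eq_addNat, finSumFinEquiv_symm_apply_natAdd, fromBlocks_apply₁₂]

@[simp] lemma bm_addNat_castAdd (a b c d : M2) (i j : Fin 2) :
    bm a b c d (i.addNat 2) (Fin.castAdd 2 j) = c i j := by
  simp only [bm, reindex_apply, submatrix_apply, finSumFinEquiv_symm_apply_castAdd,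
    ← Fin.natAdd_eq_addNat, finSumFinEquiv_symm_apply_natAdd, fromBlocks_apply₂₁]

@[simp] lemma bm_addNat_addNat (a b c d : M2) (i j : Fin 2) :
    bm a b c d (i.addNat 2) (j.addNat 2) = d i j := by
  simp only [bm, reindex_apply, submatrix_apply, ← Fin.natAdd_eq_addNat,
    finSumFinEquiv_symm_apply_natAdd, fromBlocks_apply₂₂]

lemma diag22_one_neg_one : diag22 1 (-1) = diagonal fun i => if upper i then 1 else -1 := by
  rw [diag22, bm, ← diagonal_one, diagonal_neg, fromBlocks_diagonal, reindex_apply,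
    submatrix_diagonal_equiv]
  congr 1
  funext i
  obtain ⟨i, rfl⟩ | ⟨i, rfl⟩ := fin4_cases i
  · simp only [Function.comp_apply, finSumFinEquiv_symm_apply_castAdd]
    simp
  · simp only [← Fin.natAdd_eq_addNat, finSumFinEquiv_symm_apply_natAdd, Function.comp_apply]
    simp

lemma tp_diagonal (a : Fin 4 → ℂ) (e : Fin 2 → ℂ) (b : Fin 4 → ℂ) :
    tp (diagonal a) (diagonal e) (diagonal b) = diagonal fun p => a p.1 * e p.2.1 * b p.2.2 := by
  ext ⟨p₁, p₂, p₃⟩ ⟨q₁, q₂, q₃⟩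
  simp only [tp, of_apply, diagonal_apply, Prod.mk.injEq]
  split_ifs <;> simp_all

def betaPos (p : Idx) : Bool := if p.2.1 = 0 then upper p.1 else upper p.2.2

lemma betaPS_eq_diagonal : betaPS = diagonal fun p => if betaPos p then 1 else -1 := by
  rw [betaPS, diag22_one_neg_one, eu, eu, ← diagonal_single, ← diagonal_single,
    ← diagonal_one, tp_diagonal, tp_diagonal, diagonal_add]
  congr 1
  funext ⟨p₁, p₂, p₃⟩
  fin_cases p₂ <;> simp [betaPos]

lemma commute_betaPS_iff (M : M32) :
    M * betaPS = betaPS * M ↔ ∀ p q, betaPos p ≠ betaPos q → M p q = 0 := by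
  rw [betaPS_eq_diagonal, mul_diagonal_eq_diagonal_mul_iff]
  refine forall₂_congr fun p q => imp_congr_left ?_
  cases betaPos p <;> cases betaPos q <;> norm_num

lemma betaPos_sw (p : Idx) : betaPos (sw p) = betaPos p := by
  obtain ⟨p₁, p₂, p₃⟩ := p
  fin_cases p₂ <;> simp [sw, betaPos]

lemma Jconj_apply_eq_zero {D₀ : M32} (hD₀ : ∀ p q : Idx, D₀ p q ≠ 0 → p.2.1 = 0)
    {p : Idx} (hp : p.2.1 = 0) (q : Idx) : Jconj D₀ p q = 0 := by
  have hsw : (sw p).2.1 ≠ 0 := by simp [sw, hp]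
  simp only [Jconj, of_apply, map_eq_zero]
  exact not_imp_comm.mp (hD₀ _ _) hsw

lemma commute_betaPS_add_Jconj_iff (D₀ : M32)
    (hD₀ : ∀ p q : Idx, D₀ p q ≠ 0 → p.2.1 = 0) :
    (D₀ + Jconj D₀) * betaPS = betaPS * (D₀ + Jconj D₀) ↔
      ∀ p q, betaPos p ≠ betaPos q → D₀ p q = 0 := by
  rw [commute_betaPS_iff]
  refine ⟨fun h p q hpq => ?_, fun h p q hpq => ?_⟩
  · by_cases hp : p.2.1 = 0
    · simpa [Jconj_apply_eq_zero hD₀ hp] using h p q hpq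
    · exact not_imp_comm.mp (hD₀ p q) hp
  · have hsw : betaPos (sw p) ≠ betaPos (sw q) := by rwa [betaPos_sw, betaPos_sw]
    simp [Jconj, h p q hpq, h _ _ hsw]

lemma tp_single (a b : Fin 4) (m n : Fin 2) (c d : Fin 4) (x : ℂ) :
    tp (single a b 1) (single m n 1) (single c d x) = single (a, m, c) (b, n, d) x := by
  ext ⟨p₁, p₂, p₃⟩ ⟨q₁, q₂, q₃⟩
  simp only [tp, of_apply, single_apply, Prod.mk.injEq]
  split_ifs <;> simp_all

lemma bm_submatrix (M : M4) :
    bm (M.submatrix (Fin.castAdd 2) (Fin.castAdd 2)) (M.submatrix (Fin.castAdd 2) (·.addNat 2))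
      (M.submatrix (·.addNat 2) (Fin.castAdd 2)) (M.submatrix (·.addNat 2) (·.addNat 2)) =
      M := by
  ext i j
  obtain ⟨i, rfl⟩ | ⟨i, rfl⟩ := fin4_cases i <;> obtain ⟨j, rfl⟩ | ⟨j, rfl⟩ := fin4_cases j <;>
    simp

lemma Matrix.single_submatrix_eq_zero_of_row {l m n o α : Type*} [DecidableEq m] [DecidableEq n]
    [Zero α] {a : m} {f : l → m} (hf : ∀ k, f k ≠ a) (g : o → n) (b : n) (x : α) :
    (single a b x).submatrix f g = 0 := by
  ext k k'
  simp [(hf k).symm]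

lemma Matrix.single_submatrix_eq_zero_of_col {l m n o α : Type*} [DecidableEq m] [DecidableEq n]
    [Zero α] {b : n} (f : l → m) {g : o → n} (hg : ∀ k, g k ≠ b) (a : m) (x : α) :
    (single a b x).submatrix f g = 0 := by
  ext k k'
  simp [(hg k').symm]

lemma castAdd_ne_of_upper_eq_false {a : Fin 4} (ha : upper a = false) (k : Fin 2) :
    Fin.castAdd 2 k ≠ a := by
  rintro rfl
  simp at ha

lemma addNat_ne_of_upper {a : Fin 4} (ha : upper a) (k : Fin 2) : k.addNat 2 ≠ a := by
  rintro rfl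
  simp at ha

lemma exists_diag22_eq_single {a b : Fin 4} (hab : upper a = upper b) (x : ℂ) :
    ∃ X Y, diag22 X Y = single a b x := by
  have h := bm_submatrix (single a b x)
  cases ha : upper a
  · rw [single_submatrix_eq_zero_of_row (castAdd_ne_of_upper_eq_false ha) (Fin.addNat · 2),
      single_submatrix_eq_zero_of_col (Fin.addNat · 2)
        (castAdd_ne_of_upper_eq_false (hab ▸ ha))] at h
    exact ⟨_, _, h⟩
  · rw [single_submatrix_eq_zero_of_row (addNat_ne_of_upper ha),
      single_submatrix_eq_zero_of_col _ (addNat_ne_of_upper (hab ▸ ha))] at h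
    exact ⟨_, _, h⟩

lemma exists_bm_upper_eq_single {a : Fin 4} (ha : upper a) (b : Fin 4) (x : ℂ) :
    ∃ P Q, bm P Q 0 0 = single a b x := by
  have h := bm_submatrix (single a b x)
  rw [single_submatrix_eq_zero_of_row (addNat_ne_of_upper ha),
    single_submatrix_eq_zero_of_row (addNat_ne_of_upper ha)] at h
  exact ⟨_, _, h⟩

lemma exists_bm_lower_eq_single {a : Fin 4} (ha : upper a = false) (b : Fin 4) (x : ℂ) :
    ∃ U V, bm 0 0 U V = single a b x := by
  have h := bm_submatrix (single a b x)
  rw [single_submatrix_eq_zero_of_row (castAdd_ne_of_upper_eq_false ha),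
    single_submatrix_eq_zero_of_row (castAdd_ne_of_upper_eq_false ha)] at h
  exact ⟨_, _, h⟩

lemma exists_bm_left_eq_single {b : Fin 4} (hb : upper b) (a : Fin 4) (x : ℂ) :
    ∃ Z T, bm Z 0 T 0 = single a b x := by
  have h := bm_submatrix (single a b x)
  rw [single_submatrix_eq_zero_of_col _ (addNat_ne_of_upper hb),
    single_submatrix_eq_zero_of_col _ (addNat_ne_of_upper hb)] at h
  exact ⟨_, _, h⟩

lemma exists_bm_right_eq_single {b : Fin 4} (hb : upper b = false) (a : Fin 4) (x : ℂ) :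
    ∃ W S, bm 0 W 0 S = single a b x := by
  have h := bm_submatrix (single a b x)
  rw [single_submatrix_eq_zero_of_col _ (castAdd_ne_of_upper_eq_false hb),
    single_submatrix_eq_zero_of_col _ (castAdd_ne_of_upper_eq_false hb)] at h
  exact ⟨_, _, h⟩

def betaBlock (X Y P Q Z T U V W S : M2) (A : M4) : M32 :=
  tp (diag22 X Y) (eu 0 0) A + tp (bm P Q 0 0) (eu 0 1) (bm Z 0 T 0) +
    tp (bm 0 0 U V) (eu 0 1) (bm 0 W 0 S)

def IsBetaBlock (M : M32) : Prop :=
  ∃ X Y P Q Z T U V W S A, betaBlock X Y P Q Z T U V W S A = M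

@[simp] lemma tp_zero_left (E : M2) (B : M4) : tp 0 E B = 0 := by
  ext; simp [tp]

@[simp] lemma tp_zero_right (A : M4) (E : M2) : tp A E 0 = 0 := by
  ext; simp [tp]

@[simp] lemma bm_zero : bm 0 0 0 0 = 0 := by
  simp [bm]

lemma isBetaBlock_zero : IsBetaBlock 0 :=
  ⟨0, 0, 0, 0, 0, 0, 0, 0, 0, 0, 0, by simp [betaBlock, diag22]⟩

lemma isBetaBlock_tp_diag22 (X Y : M2) (A : M4) : IsBetaBlock (tp (diag22 X Y) (eu 0 0) A) :=
  ⟨X, Y, 0, 0, 0, 0, 0, 0, 0, 0, A, by simp [betaBlock]⟩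

lemma isBetaBlock_tp_upper (P Q Z T : M2) :
    IsBetaBlock (tp (bm P Q 0 0) (eu 0 1) (bm Z 0 T 0)) :=
  ⟨0, 0, P, Q, Z, T, 0, 0, 0, 0, 0, by simp [betaBlock]⟩

lemma isBetaBlock_tp_lower (U V W S : M2) :
    IsBetaBlock (tp (bm 0 0 U V) (eu 0 1) (bm 0 W 0 S)) :=
  ⟨0, 0, 0, 0, 0, 0, U, V, W, S, 0, by simp [betaBlock]⟩

lemma isBetaBlock_single {p q : Idx} (hp : p.2.1 = 0) (hpq : betaPos p = betaPos q) (x : ℂ) :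
    IsBetaBlock (single p q x) := by
  obtain ⟨p₁, p₂, p₃⟩ := p
  obtain ⟨q₁, q₂, q₃⟩ := q
  obtain rfl : p₂ = 0 := hp
  rw [← tp_single]
  fin_cases q₂
  · obtain ⟨X, Y, h⟩ := exists_diag22_eq_single (by simpa [betaPos] using hpq) 1
    rw [← h]
    exact isBetaBlock_tp_diag22 X Y _
  · have hpq : upper p₁ = upper q₃ := by simpa [betaPos] using hpq
    cases hup : upper p₁
    · obtain ⟨U, V, h₁⟩ := exists_bm_lower_eq_single hup q₁ 1
      obtain ⟨W, S, h₂⟩ := exists_bm_right_eq_single (hpq ▸ hup) p₃ x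
      rw [← h₁, ← h₂]
      exact isBetaBlock_tp_lower U V W S
    · obtain ⟨P, Q, h₁⟩ := exists_bm_upper_eq_single hup q₁ 1
      obtain ⟨Z, T, h₂⟩ := exists_bm_left_eq_single (hpq ▸ hup) p₃ x
      rw [← h₁, ← h₂]
      exact isBetaBlock_tp_upper P Q Z T

lemma betaBlock_apply_eq_zero (X Y P Q Z T U V W S : M2) (A : M4) {p q : Idx}
    (hpq : betaPos p ≠ betaPos q) : betaBlock X Y P Q Z T U V W S A p q = 0 := by
  obtain ⟨p₁, p₂, p₃⟩ := p
  obtain ⟨q₁, q₂, q₃⟩ := q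
  obtain ⟨p₁, rfl⟩ | ⟨p₁, rfl⟩ := fin4_cases p₁ <;>
    obtain ⟨q₁, rfl⟩ | ⟨q₁, rfl⟩ := fin4_cases q₁ <;>
    obtain ⟨p₃, rfl⟩ | ⟨p₃, rfl⟩ := fin4_cases p₃ <;>
    obtain ⟨q₃, rfl⟩ | ⟨q₃, rfl⟩ := fin4_cases q₃ <;>
    fin_cases p₂ <;> fin_cases q₂ <;>
    simp_all [betaBlock, betaPos, tp, eu, single_apply, diag22]

lemma exists_sum_betaBlock_of_forall {ι : Type*} [Fintype ι] (f : ι → M32)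
    (hf : ∀ i, IsBetaBlock (f i)) :
    ∃ (n : ℕ) (X Y P Q Z T U V W S : Fin n → M2) (A : Fin n → M4),
      ∑ i, f i = ∑ k : Fin n, betaBlock (X k) (Y k) (P k) (Q k) (Z k) (T k) (U k) (V k) (W k)
        (S k) (A k) := by
  choose X Y P Q Z T U V W S A hf using hf
  let e := (Fintype.equivFin ι).symm
  refine ⟨Fintype.card ι, X ∘ e, Y ∘ e, P ∘ e, Q ∘ e, Z ∘ e, T ∘ e, U ∘ e, V ∘ e, W ∘ e,
    S ∘ e, A ∘ e, ?_⟩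
  simp only [Function.comp_apply, hf]
  exact (e.sum_comp f).symm

lemma forall_betaPos_ne_iff_exists_sum_betaBlock (D₀ : M32)
    (hD₀ : ∀ p q : Idx, D₀ p q ≠ 0 → p.2.1 = 0) :
    (∀ p q, betaPos p ≠ betaPos q → D₀ p q = 0) ↔
      ∃ (n : ℕ) (X Y P Q Z T U V W S : Fin n → M2) (A : Fin n → M4),
        D₀ = ∑ k : Fin n, betaBlock (X k) (Y k) (P k) (Q k) (Z k) (T k) (U k) (V k) (W k)
          (S k) (A k) := by
  constructor
  · intro h
    rw [matrix_eq_sum_single D₀, ← Fintype.sum_prod_type']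
    refine exists_sum_betaBlock_of_forall _ fun pq => ?_
    by_cases hpq : pq.1.2.1 = 0 ∧ betaPos pq.1 = betaPos pq.2
    · exact isBetaBlock_single hpq.1 hpq.2 _
    · have hD₀pq : D₀ pq.1 pq.2 = 0 := by
        by_cases hp : pq.1.2.1 = 0
        · exact h _ _ fun h' => hpq ⟨hp, h'⟩
        · exact not_imp_comm.mp (hD₀ _ _) hp
      rw [hD₀pq, single_zero]
      exact isBetaBlock_zero
  · rintro ⟨n, X, Y, P, Q, Z, T, U, V, W, S, A, rfl⟩ p q hpq
    rw [Matrix.sum_apply]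
    exact Finset.sum_eq_zero fun k _ => betaBlock_apply_eq_zero _ _ _ _ _ _ _ _ _ _ _ hpq

/-- A Dirac operator `D = D₀ + J D₀ J⁻¹` commutes with
`β = diag(1₂,-1₂) ⊗ e₁₁ ⊗ 1₄ + 1₄ ⊗ e₂₂ ⊗ diag(1₂,-1₂)` iff `D₀` has the stated
block form. -/
theorem commute_beta_iff (D0 : M32)
    (hD0 : ∀ p q : Idx, D0 p q ≠ 0 → p.2.1 = 0) :
    (D0 + Jconj D0) * betaPS = betaPS * (D0 + Jconj D0) ↔
    ∃ (n : ℕ) (X Y P Q Z T U V W S : Fin n → M2) (A : Fin n → M4),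
      D0 = ∑ k : Fin n,
        (tp (diag22 (X k) (Y k)) (eu 0 0) (A k) +
         tp (bm (P k) (Q k) 0 0) (eu 0 1) (bm (Z k) 0 (T k) 0) +
         tp (bm 0 0 (U k) (V k)) (eu 0 1) (bm 0 (W k) 0 (S k))) :=
  (commute_betaPS_add_Jconj_iff D0 hD0).trans (forall_betaPos_ne_iff_exists_sum_betaBlock D0 hD0)
end
end
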